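/- Let G be a simple graph with m ≥ 1 edges, T_G triangles, and trussness t_G, and let x ≥ 0 be an integer. With G(x) the disjoint union of G and ℓ = ⌈m / C(x+2,2)⌉ disjoint copies of K_{x+2}, and T', m' the triangle and edge counts of G(x), one has T'/m' ≤ max{t_G, x/3}. -/

import Mathlib

/-- The support of the edge `{u,v}` in graph `H`. -/
noncomputable def supp {V : Type*} (H : SimpleGraph V) (u v : V) : ℕ :=
  {w | H.Adj u w ∧ H.Adj v w}.ncard

/-- The number of triangles of `G`. -/
noncomputable def triCount {V : Type*} (G : SimpleGraph V) : ℕ :=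
  {t : Finset V | G.IsNClique 3 t}.ncard

/-- The trussness of `G`. -/
noncomputable def trussness {V : Type*} (G : SimpleGraph V) : ℕ :=
  sSup {k | ∃ H : SimpleGraph V, H ≤ G ∧ H ≠ ⊥ ∧ ∀ u v, H.Adj u v → k ≤ supp H u v}

/-- `G(x)`: the disjoint union of `G` with `ℓ` disjoint copies of the complete graph
`K_{x+2}` (the "spurious cliques"). -/
def addCliques {V : Type*} (G : SimpleGraph V) (x ℓ : ℕ) :
    SimpleGraph (V ⊕ (Fin ℓ × Fin (x + 2))) where
  Adj a b := (∃ u v, a = Sum.inl u ∧ b = Sum.inl v ∧ G.Adj u v) ∨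
    (∃ i u v, a = Sum.inr (i, u) ∧ b = Sum.inr (i, v) ∧ u ≠ v)
  symm := ⟨fun a b h => by
    rcases h with ⟨u, v, h1, h2, h3⟩ | ⟨i, u, v, h1, h2, h3⟩
    · exact Or.inl ⟨v, u, h2, h1, h3.symm⟩
    · exact Or.inr ⟨i, v, u, h2, h1, h3.symm⟩⟩
  loopless := ⟨fun a h => by
    rcases h with ⟨u, v, h1, h2, h3⟩ | ⟨i, u, v, h1, h2, h3⟩ <;> simp_all⟩

/-!
By the definition of trussness, every nonempty subgraph of `G` has an edge lying in at most
`t_G` triangles of that subgraph. Deleting such edges one at a time destroys at most `t_G`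
triangles per edge, so `T_G ≤ m · t_G`. The `ℓ` cliques `K_{x+2}` are vertex-disjoint from `G`
and from each other, so they add `ℓ·C(x+2,3)` triangles and `ℓ·C(x+2,2)` edges, in the ratio
`x/3`; a mediant of two ratios is at most the larger of them.
-/

open scoped Function

namespace SimpleGraph

section DisjointSupports

variable {ι V : Type*} {K : ι → SimpleGraph V}

theorem eq_of_mem_support_of_pairwise_disjoint
    (hK : Pairwise (Disjoint on fun i ↦ (K i).support)) {i j : ι} {v : V}
    (hi : v ∈ (K i).support) (hj : v ∈ (K j).support) : i = j := by
  by_contra hij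
  exact Set.disjoint_left.mp (hK hij) hi hj

theorem pairwise_disjoint_edgeSet_of_pairwise_disjoint_support
    (hK : Pairwise (Disjoint on fun i ↦ (K i).support)) :
    Pairwise (Disjoint on fun i ↦ (K i).edgeSet) := by
  intro i j hij
  refine Set.disjoint_left.mpr fun e hei hej ↦ hij ?_
  induction e using Sym2.ind with
  | _ u v =>
    exact eq_of_mem_support_of_pairwise_disjoint hK hei.mem_support_left hej.mem_support_left

theorem pairwise_disjoint_cliqueSet_of_pairwise_disjoint_support
    (hK : Pairwise (Disjoint on fun i ↦ (K i).support)) {n : ℕ} (hn : 2 ≤ n) :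
    Pairwise (Disjoint on fun i ↦ (K i).cliqueSet n) := by
  intro i j hij
  refine Set.disjoint_left.mpr fun s hsi hsj ↦ hij ?_
  obtain ⟨a, ha, b, hb, hab⟩ := Finset.one_lt_card.mp (hsi.card_eq ▸ hn)
  exact eq_of_mem_support_of_pairwise_disjoint hK
    (hsi.isClique ha hb hab).mem_support_left (hsj.isClique ha hb hab).mem_support_left

theorem cliqueSet_iSup_of_pairwise_disjoint_support
    (hK : Pairwise (Disjoint on fun i ↦ (K i).support)) {n : ℕ} (hn : 2 ≤ n) :
    (⨆ i, K i).cliqueSet n = ⋃ i, (K i).cliqueSet n := by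
  refine subset_antisymm (fun s hs ↦ ?_)
    (Set.iUnion_subset fun i ↦ cliqueSet_mono (le_iSup K i))
  obtain ⟨a, ha, b, hb, hab⟩ := Finset.one_lt_card.mp (hs.card_eq ▸ hn)
  obtain ⟨i, hi⟩ := iSup_adj.mp (hs.isClique ha hb hab)
  -- Each `c ∈ s` is joined to `a` in some `K j`, and `a ∈ (K i).support` forces `j = i`.
  have hsupp : ∀ c ∈ s, c ∈ (K i).support := by
    intro c hc
    obtain rfl | hac := eq_or_ne a c
    · exact hi.mem_support_left
    obtain ⟨j, hj⟩ := iSup_adj.mp (hs.isClique ha hc hac)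
    obtain rfl := eq_of_mem_support_of_pairwise_disjoint hK hi.mem_support_left
      hj.mem_support_left
    exact hj.symm.mem_support_left
  refine Set.mem_iUnion.mpr ⟨i, ⟨fun c hc d hd hcd ↦ ?_, hs.card_eq⟩⟩
  obtain ⟨j, hj⟩ := iSup_adj.mp (hs.isClique hc hd hcd)
  obtain rfl := eq_of_mem_support_of_pairwise_disjoint hK (hsupp c hc) hj.mem_support_left
  exact hj

variable [Fintype ι] [Finite V]

theorem ncard_edgeSet_iSup_of_pairwise_disjoint_support
    (hK : Pairwise (Disjoint on fun i ↦ (K i).support)) :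
    (⨆ i, K i).edgeSet.ncard = ∑ i, (K i).edgeSet.ncard := by
  rw [edgeSet_iSup, Set.ncard_iUnion_of_finite (fun _ ↦ Set.toFinite _)
    (pairwise_disjoint_edgeSet_of_pairwise_disjoint_support hK), finsum_eq_sum_of_fintype]

theorem ncard_cliqueSet_iSup_of_pairwise_disjoint_support
    (hK : Pairwise (Disjoint on fun i ↦ (K i).support)) {n : ℕ} (hn : 2 ≤ n) :
    ((⨆ i, K i).cliqueSet n).ncard = ∑ i, ((K i).cliqueSet n).ncard := by
  rw [cliqueSet_iSup_of_pairwise_disjoint_support hK hn,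
    Set.ncard_iUnion_of_finite (fun _ ↦ Set.toFinite _)
      (pairwise_disjoint_cliqueSet_of_pairwise_disjoint_support hK hn),
    finsum_eq_sum_of_fintype]

end DisjointSupports

variable {V W : Type*}

theorem support_map_subset_range (f : V ↪ W) (G : SimpleGraph V) :
    (G.map f).support ⊆ Set.range f := by
  rintro _ ⟨_, -, u, _, -, rfl, -⟩
  exact Set.mem_range_self u

theorem ncard_edgeSet_map (f : V ↪ W) (G : SimpleGraph V) :
    (G.map f).edgeSet.ncard = G.edgeSet.ncard := by
  rw [edgeSet_map, Set.ncard_image_of_injective _ f.sym2Map.injective]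

theorem ncard_cliqueSet_map {n : ℕ} (hn : n ≠ 1) (f : V ↪ W) (G : SimpleGraph V) :
    ((G.map f).cliqueSet n).ncard = (G.cliqueSet n).ncard := by
  rw [cliqueSet_map hn, Set.ncard_image_of_injective _ (Finset.map_injective f)]

theorem ncard_edgeSet_top [Fintype V] :
    (⊤ : SimpleGraph V).edgeSet.ncard = (Fintype.card V).choose 2 := by
  classical
  rw [← card_edgeFinset_top_eq_card_choose_two, ← Set.ncard_coe_finset, coe_edgeFinset]

theorem ncard_cliqueSet_top [Fintype V] (n : ℕ) :
    ((⊤ : SimpleGraph V).cliqueSet n).ncard = (Fintype.card V).choose n := by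
  have : (⊤ : SimpleGraph V).cliqueSet n = (Finset.univ.powersetCard n : Finset (Finset V)) := by
    ext s
    simp [isNClique_iff, Finset.mem_powersetCard]
  rw [this, Set.ncard_coe_finset, Finset.card_powersetCard, Finset.card_univ]

end SimpleGraph

section Counting

open SimpleGraph

variable {V : Type*}

def addCliquesSummand (G : SimpleGraph V) (x ℓ : ℕ) :
    Option (Fin ℓ) → SimpleGraph (V ⊕ (Fin ℓ × Fin (x + 2)))
  | none => G.map Function.Embedding.inl
  | some i => (⊤ : SimpleGraph (Fin (x + 2))).map
      ((Function.Embedding.sectR i _).trans Function.Embedding.inr)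

theorem addCliques_eq_iSup_addCliquesSummand (G : SimpleGraph V) (x ℓ : ℕ) :
    addCliques G x ℓ = ⨆ o, addCliquesSummand G x ℓ o := by
  ext a b
  simp only [iSup_adj, Option.exists, addCliquesSummand, map_adj, top_adj]
  constructor
  · rintro (⟨u, v, rfl, rfl, h⟩ | ⟨i, u, v, rfl, rfl, h⟩)
    · exact Or.inl ⟨u, v, h, rfl, rfl⟩
    · exact Or.inr ⟨i, u, v, h, rfl, rfl⟩
  · rintro (⟨u, v, h, rfl, rfl⟩ | ⟨i, u, v, h, rfl, rfl⟩)
    · exact Or.inl ⟨u, v, rfl, rfl, h⟩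
    · exact Or.inr ⟨i, u, v, rfl, rfl, h⟩

theorem support_addCliquesSummand_subset (G : SimpleGraph V) (x ℓ : ℕ) (o : Option (Fin ℓ)) :
    (addCliquesSummand G x ℓ o).support ⊆
      Sum.elim (fun _ ↦ none) (some ∘ Prod.fst) ⁻¹' {o} := by
  cases o <;>
  · dsimp only [addCliquesSummand]
    refine (support_map_subset_range _ _).trans ?_
    rintro _ ⟨u, rfl⟩
    rfl

theorem pairwise_disjoint_support_addCliquesSummand (G : SimpleGraph V) (x ℓ : ℕ) :
    Pairwise (Disjoint on fun o ↦ (addCliquesSummand G x ℓ o).support) := fun o o' h ↦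
  ((Set.disjoint_singleton.mpr h).preimage _).mono
    (support_addCliquesSummand_subset G x ℓ o) (support_addCliquesSummand_subset G x ℓ o')

theorem triCount_eq_ncard_cliqueSet (G : SimpleGraph V) : triCount G = (G.cliqueSet 3).ncard :=
  rfl

theorem triCount_bot : triCount (⊥ : SimpleGraph V) = 0 := by
  rw [triCount_eq_ncard_cliqueSet, cliqueSet_bot (by norm_num), Set.ncard_empty]

variable [Finite V]

theorem ncard_edgeSet_addCliques (G : SimpleGraph V) (x ℓ : ℕ) :
    (addCliques G x ℓ).edgeSet.ncard = G.edgeSet.ncard + ℓ * (x + 2).choose 2 := by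
  rw [addCliques_eq_iSup_addCliquesSummand, ncard_edgeSet_iSup_of_pairwise_disjoint_support
    (pairwise_disjoint_support_addCliquesSummand G x ℓ), Fintype.sum_option]
  simp only [addCliquesSummand, ncard_edgeSet_map, ncard_edgeSet_top, Fintype.card_fin,
    Finset.sum_const, Finset.card_univ, smul_eq_mul]

theorem triCount_addCliques (G : SimpleGraph V) (x ℓ : ℕ) :
    triCount (addCliques G x ℓ) = triCount G + ℓ * (x + 2).choose 3 := by
  rw [triCount_eq_ncard_cliqueSet, triCount_eq_ncard_cliqueSet,
    addCliques_eq_iSup_addCliquesSummand, ncard_cliqueSet_iSup_of_pairwise_disjoint_support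
      (pairwise_disjoint_support_addCliquesSummand G x ℓ) (by norm_num), Fintype.sum_option]
  simp only [addCliquesSummand, ncard_cliqueSet_map (by norm_num : 3 ≠ 1), ncard_cliqueSet_top,
    Fintype.card_fin, Finset.sum_const, Finset.card_univ, smul_eq_mul]

theorem triCount_le_triCount_deleteEdges_add_supp (H : SimpleGraph V) (u v : V) :
    triCount H ≤ triCount (H.deleteEdges {s(u, v)}) + supp H u v := by
  classical
  -- A triangle through the deleted edge is `{u, v, w}` for a common neighbour `w`.
  have hcover : H.cliqueSet 3 ⊆ (H.deleteEdges {s(u, v)}).cliqueSet 3 ∪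
      (fun w ↦ {u, v, w}) '' {w | H.Adj u w ∧ H.Adj v w} := by
    intro t ⟨ht, hcard⟩
    by_cases huv : u ∈ t ∧ v ∈ t ∧ u ≠ v
    · obtain ⟨hu, hv, hne⟩ := huv
      obtain ⟨w, hw, hwuv⟩ := Finset.exists_mem_notMem_of_card_lt_card
        (s := {u, v}) (by rw [hcard, Finset.card_pair hne]; norm_num)
      simp only [Finset.mem_insert, Finset.mem_singleton, not_or] at hwuv
      refine Or.inr ⟨w, ⟨ht hu hw (Ne.symm hwuv.1), ht hv hw (Ne.symm hwuv.2)⟩, ?_⟩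
      refine Finset.eq_of_subset_of_card_le (s := {u, v, w}) (t := t)
        (by simp [Finset.insert_subset_iff, *]) ?_
      rw [hcard, Finset.card_insert_of_notMem (by simp [hne, Ne.symm hwuv.1]),
        Finset.card_pair (Ne.symm hwuv.2)]
    · refine Or.inl ⟨fun a ha b hb hab ↦ deleteEdges_adj.mpr ⟨ht ha hb hab, fun h ↦ huv ?_⟩,
        hcard⟩
      rcases Sym2.eq_iff.mp (Set.mem_singleton_iff.mp h) with ⟨rfl, rfl⟩ | ⟨rfl, rfl⟩
      · exact ⟨ha, hb, hab⟩
      · exact ⟨hb, ha, hab.symm⟩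
  rw [triCount_eq_ncard_cliqueSet, triCount_eq_ncard_cliqueSet, supp]
  calc (H.cliqueSet 3).ncard
      ≤ ((H.deleteEdges {s(u, v)}).cliqueSet 3).ncard +
          ((fun w ↦ ({u, v, w} : Finset V)) '' {w | H.Adj u w ∧ H.Adj v w}).ncard :=
        (Set.ncard_le_ncard hcover (Set.toFinite _)).trans (Set.ncard_union_le _ _)
    _ ≤ _ := Nat.add_le_add_left (Set.ncard_image_le (Set.toFinite _)) _

theorem triCount_le_ncard_edgeSet_mul_of_forall_exists_supp_le {k : ℕ} {G : SimpleGraph V}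
    (h : ∀ H ≤ G, H ≠ ⊥ → ∃ u v, H.Adj u v ∧ supp H u v ≤ k) :
    triCount G ≤ G.edgeSet.ncard * k := by
  induction hm : G.edgeSet.ncard generalizing G with
  | zero =>
    rw [(Set.ncard_eq_zero (Set.toFinite _)).mp hm |> edgeSet_eq_empty.mp, triCount_bot]
    simp
  | succ n ih =>
    have hG : G ≠ ⊥ := by
      rintro rfl
      simp at hm
    obtain ⟨u, v, huv, hsupp⟩ := h G le_rfl hG
    have hdel : (G.deleteEdges {s(u, v)}).edgeSet.ncard = n := by
      rw [edgeSet_deleteEdges, Set.ncard_sdiff_singleton_of_mem (G.mem_edgeSet.mpr huv), hm,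
        Nat.add_sub_cancel]
    have hrec := ih (fun H hH ↦ h H (hH.trans (deleteEdges_le _))) hdel
    calc triCount G ≤ triCount (G.deleteEdges {s(u, v)}) + supp G u v :=
          triCount_le_triCount_deleteEdges_add_supp G u v
      _ ≤ n * k + k := by omega
      _ = (n + 1) * k := by ring

theorem exists_supp_le_trussness {G H : SimpleGraph V} (hHG : H ≤ G) (hH : H ≠ ⊥) :
    ∃ u v, H.Adj u v ∧ supp H u v ≤ trussness G := by
  by_contra! hlt
  have hbdd : BddAbove
      {k | ∃ H : SimpleGraph V, H ≤ G ∧ H ≠ ⊥ ∧ ∀ u v, H.Adj u v → k ≤ supp H u v} := by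
    refine ⟨Nat.card V, fun k ⟨H', _, hH', hk⟩ ↦ ?_⟩
    obtain ⟨e, he⟩ := edgeSet_nonempty.mpr hH'
    induction e using Sym2.ind with
    | _ a b => exact (hk a b he).trans (Set.ncard_le_card _)
  exact (le_csSup hbdd ⟨H, hHG, hH, hlt⟩).not_gt (Nat.lt_succ_self _)

theorem triCount_le_ncard_edgeSet_mul_trussness (G : SimpleGraph V) :
    triCount G ≤ G.edgeSet.ncard * trussness G :=
  triCount_le_ncard_edgeSet_mul_of_forall_exists_supp_le fun _ hHG hH ↦
    exists_supp_le_trussness hHG hH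

end Counting

theorem add_div_add_le_max {𝕜 : Type*} [Field 𝕜] [LinearOrder 𝕜] [IsStrictOrderedRing 𝕜]
    {a b c d p q : 𝕜} (hb : 0 ≤ b) (hd : 0 ≤ d) (hq : 0 ≤ q) (hab : a ≤ b * p)
    (hcd : c ≤ d * q) : (a + c) / (b + d) ≤ max p q := by
  refine div_le_of_le_mul₀ (add_nonneg hb hd) (hq.trans (le_max_right p q)) ?_
  calc a + c ≤ b * p + d * q := add_le_add hab hcd
    _ ≤ b * max p q + d * max p q := by gcongr <;> simp
    _ = max p q * (b + d) := by ring

theorem addCliques_density_le_max_general {V : Type*} [Fintype V]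
    (G : SimpleGraph V) (x ℓ : ℕ) :
    (triCount (addCliques G x ℓ) : ℝ) / ((addCliques G x ℓ).edgeSet.ncard : ℝ) ≤
      max (trussness G : ℝ) ((x : ℝ) / 3) := by
  have hchoose : ((x + 2).choose 3 : ℝ) = (x + 2).choose 2 * ((x : ℝ) / 3) := by
    have h := Nat.choose_succ_right_eq (x + 2) 2
    rw [Nat.add_sub_cancel] at h
    rw [mul_div_assoc', eq_div_iff three_ne_zero]
    exact_mod_cast h
  rw [triCount_addCliques, ncard_edgeSet_addCliques]
  push_cast
  refine add_div_add_le_max (by positivity) (by positivity) (by positivity) ?_ ?_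
  · exact_mod_cast triCount_le_ncard_edgeSet_mul_trussness G
  · rw [hchoose, mul_assoc]

/-- With `ℓ = ⌈m / C(x+2,2)⌉`, the triangle density of `G(x)` is at most
`max{t_G, x/3}`. -/
theorem addCliques_density_le_max {V : Type*} [Fintype V]
    (G : SimpleGraph V) (x ℓ : ℕ) (hm : 1 ≤ G.edgeSet.ncard)
    (hℓ : ℓ = ⌈(G.edgeSet.ncard : ℚ) / ((x + 2).choose 2 : ℚ)⌉₊) :
    (triCount (addCliques G x ℓ) : ℝ) / ((addCliques G x ℓ).edgeSet.ncard : ℝ) ≤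
      max (trussness G : ℝ) ((x : ℝ) / 3) :=
  addCliques_density_le_max_general G x ℓ
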